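/- Let 𝔐 be a class of preference models and ★ a dynamic operator closed over 𝔐, and suppose the schemata [★ψ][≤]ξ → (ψ → [≤](ψ → [★ψ]ξ)), [★ψ][<]ξ → (ψ → [<](ψ → [★ψ]ξ)), [≤][★ψ]ξ → (ψ → [★ψ][≤](ψ → ξ)), and [<][★ψ]ξ → (ψ → [★ψ][<](ψ → ξ)) are valid in 𝔇 = ⟨𝔐, ★⟩ for all ψ ∈ L_0 and ξ ∈ L_≤(★). Then for all propositional formulas φ, ψ ∈ L_0 such that 𝔇 ⊨ φ → ψ and every ξ ∈ L_≤(★), it holds that 𝔇 ⊨ [★ψ]B(ξ | φ) ↔ B([★ψ]ξ | φ). -/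

import Mathlib

/-!
Instantiated at `ξ := ¬μφ`, the two strict-order axioms say: if a `ψ`-world `w` has a `ψ`-world
strictly below it in one of the orders `≤`, `≤_{★ψ}` that is `≤_{★ψ}`-minimal among the
`φ`-worlds, then it also has such a world strictly below it in the other order. Since every
`φ`-world is a `ψ`-world and both strict orders are well-founded, this forces the minimal
`φ`-worlds before and after the update to coincide. Both `[★ψ]B(ξ | φ)` and `B([★ψ]ξ | φ)` say
that `ξ` holds after the update at these worlds.
-/

inductive PForm (P : Type) : Type
  | atom : P → PForm P
  | neg  : PForm P → PForm P
  | and  : PForm P → PForm P → PForm P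

inductive DForm (P : Type) : Type
  | atom  : P → DForm P
  | neg   : DForm P → DForm P
  | and   : DForm P → DForm P → DForm P
  | all   : DForm P → DForm P
  | boxLe : DForm P → DForm P
  | boxLt : DForm P → DForm P
  | dyn   : PForm P → DForm P → DForm P

structure PrefModel (P : Type) where
  W : Type
  le : W → W → Prop
  refl : ∀ w, le w w
  trans : ∀ w₁ w₂ w₃, le w₁ w₂ → le w₂ w₃ → le w₁ w₃
  wf : WellFounded (fun w w' => le w w' ∧ ¬ le w' w)
  val : P → Set W

namespace PrefModel
variable {P : Type}
def lt (M : PrefModel P) (w w' : M.W) : Prop := M.le w w' ∧ ¬ M.le w' w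
def Min (M : PrefModel P) (S : Set M.W) : Set M.W :=
  {w | w ∈ S ∧ ¬ ∃ w' ∈ S, M.le w' w ∧ ¬ M.le w w'}
end PrefModel

def psat {P : Type} (M : PrefModel P) : PForm P → M.W → Prop
  | .atom p, w => w ∈ M.val p
  | .neg φ, w => ¬ psat M φ w
  | .and φ ψ, w => psat M φ w ∧ psat M ψ w

def pext {P : Type} (M : PrefModel P) (φ : PForm P) : Set M.W := {w | psat M φ w}

structure DynOp (P : Type) where
  rel : (M : PrefModel P) → PForm P → M.W → M.W → Prop
  refl : ∀ M φ w, rel M φ w w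
  trans : ∀ M φ w₁ w₂ w₃, rel M φ w₁ w₂ → rel M φ w₂ w₃ → rel M φ w₁ w₃
  wf : ∀ M φ, WellFounded (fun w w' => rel M φ w w' ∧ ¬ rel M φ w' w)

def DynOp.apply {P : Type} (s : DynOp P) (M : PrefModel P) (φ : PForm P) : PrefModel P where
  W := M.W
  le := s.rel M φ
  refl := s.refl M φ
  trans := s.trans M φ
  wf := s.wf M φ
  val := M.val

def DynOp.srel {P : Type} (s : DynOp P) (M : PrefModel P) (φ : PForm P) (w w' : M.W) : Prop :=
  s.rel M φ w w' ∧ ¬ s.rel M φ w' w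

def PForm.toD {P : Type} : PForm P → DForm P
  | .atom p => .atom p
  | .neg φ => .neg φ.toD
  | .and φ ψ => .and φ.toD ψ.toD

namespace DForm
variable {P : Type}
def imp (ξ ψ : DForm P) : DForm P := .neg (.and ξ (.neg ψ))
def iff (ξ ψ : DForm P) : DForm P := .and (imp ξ ψ) (imp ψ ξ)
def or (ξ ψ : DForm P) : DForm P := .neg (.and (.neg ξ) (.neg ψ))
def exi (ξ : DForm P) : DForm P := .neg (.all (.neg ξ))
def diaLt (ξ : DForm P) : DForm P := .neg (.boxLt (.neg ξ))
def mu (ξ : DForm P) : DForm P := .and ξ (.neg (diaLt ξ))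
def bel (ψ χ : DForm P) : DForm P := .all (imp (mu χ) ψ)
end DForm

def dsat {P : Type} (s : DynOp P) : DForm P → (M : PrefModel P) → M.W → Prop
  | .atom p, M, w => w ∈ M.val p
  | .neg ξ, M, w => ¬ dsat s ξ M w
  | .and ξ₁ ξ₂, M, w => dsat s ξ₁ M w ∧ dsat s ξ₂ M w
  | .all ξ, M, _ => ∀ w', dsat s ξ M w'
  | .boxLe ξ, M, w => ∀ w', M.le w' w → dsat s ξ M w'
  | .boxLt ξ, M, w => ∀ w', M.lt w' w → dsat s ξ M w'
  | .dyn φ ξ, M, w => dsat s ξ (s.apply M φ) w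

def ClosedOver {P : Type} (s : DynOp P) (𝔐 : Set (PrefModel P)) : Prop :=
  ∀ M ∈ 𝔐, ∀ φ : PForm P, s.apply M φ ∈ 𝔐

section Semantics

variable {P : Type} (s : DynOp P)

lemma dsat_toD (χ : PForm P) (M : PrefModel P) (w : M.W) :
    dsat s χ.toD M w ↔ psat M χ w := by
  induction χ with
  | atom p => exact Iff.rfl
  | neg φ ih => exact not_congr ih
  | and φ₁ φ₂ ih₁ ih₂ => exact and_congr ih₁ ih₂

lemma psat_apply (M : PrefModel P) (ψ χ : PForm P) (w : M.W) :
    psat (s.apply M ψ) χ w ↔ psat M χ w := by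
  induction χ with
  | atom p => exact Iff.rfl
  | neg φ ih => exact not_congr ih
  | and φ₁ φ₂ ih₁ ih₂ => exact and_congr ih₁ ih₂

lemma pext_apply (M : PrefModel P) (ψ χ : PForm P) : pext (s.apply M ψ) χ = pext M χ :=
  Set.ext fun w => psat_apply s M ψ χ w

lemma dsat_imp (a b : DForm P) (M : PrefModel P) (w : M.W) :
    dsat s (a.imp b) M w ↔ (dsat s a M w → dsat s b M w) := by
  simp only [DForm.imp, dsat]
  tauto

lemma dsat_iff (a b : DForm P) (M : PrefModel P) (w : M.W) :
    dsat s (a.iff b) M w ↔ (dsat s a M w ↔ dsat s b M w) := by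
  simp only [DForm.iff, dsat, dsat_imp]
  tauto

lemma dsat_mu_toD (φ : PForm P) (M : PrefModel P) (w : M.W) :
    dsat s (DForm.mu φ.toD) M w ↔ w ∈ M.Min (pext M φ) := by
  simp only [DForm.mu, DForm.diaLt, dsat, dsat_toD, not_not, PrefModel.Min, PrefModel.lt, pext,
    Set.mem_ofPred_eq, not_exists, not_and]
  exact and_congr_right fun _ => forall_congr' fun x => by tauto

lemma dsat_mu_toD_apply (φ ψ : PForm P) (M : PrefModel P) (w : M.W) :
    dsat s (DForm.mu φ.toD) (s.apply M ψ) w ↔ w ∈ (s.apply M ψ).Min (pext M φ) :=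
  (dsat_mu_toD s φ (s.apply M ψ) w).trans (by rw [pext_apply]; exact Iff.rfl)

lemma dsat_bel_toD (ξ : DForm P) (φ : PForm P) (M : PrefModel P) (w : M.W) :
    dsat s (DForm.bel ξ φ.toD) M w ↔ ∀ u ∈ M.Min (pext M φ), dsat s ξ M u := by
  simp only [DForm.bel, dsat, dsat_imp, dsat_mu_toD]

lemma dsat_dyn_bel_toD (ξ : DForm P) (φ ψ : PForm P) (M : PrefModel P) (w : M.W) :
    dsat s (.dyn ψ (DForm.bel ξ φ.toD)) M w ↔
      ∀ u ∈ (s.apply M ψ).Min (pext M φ), dsat s (.dyn ψ ξ) M u :=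
  (dsat_bel_toD s ξ φ (s.apply M ψ) w).trans (by rw [pext_apply]; exact Iff.rfl)

end Semantics

section Minimality

variable {P : Type}

lemma PrefModel.exists_mem_Min_lt (M : PrefModel P) {S : Set M.W} {x w : M.W}
    (hx : x ∈ S) (hxw : M.lt x w) : ∃ z ∈ M.Min S, M.lt z w := by
  obtain ⟨z, ⟨hzS, hzw⟩, hzmin⟩ := M.wf.has_min {y | y ∈ S ∧ M.lt y w} ⟨x, hx, hxw⟩
  refine ⟨z, ⟨hzS, fun ⟨y, hyS, hyz⟩ => hzmin y ⟨hyS, ?_⟩ hyz⟩, hzw⟩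
  exact ⟨M.trans _ _ _ hyz.1 hzw.1, fun hwy => hzw.2 (M.trans _ _ _ hwy hyz.1)⟩

variable (s : DynOp P) (M : PrefModel P) (ψ : PForm P) {S T : Set M.W}

lemma Min_subset_Min_apply (hST : S ⊆ T)
    (hdown : ∀ w ∈ T, ∀ v ∈ T, (s.apply M ψ).lt v w → v ∈ (s.apply M ψ).Min S →
      ∃ u, M.lt u w ∧ u ∈ (s.apply M ψ).Min S) :
    M.Min S ⊆ (s.apply M ψ).Min S := by
  rintro w ⟨hwS, hwmin⟩
  refine ⟨hwS, fun ⟨x, hxS, hxw⟩ => ?_⟩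
  obtain ⟨z, hzmin, hzw⟩ := (s.apply M ψ).exists_mem_Min_lt hxS hxw
  obtain ⟨u, huw, humin⟩ := hdown w (hST hwS) z (hST hzmin.1) hzw hzmin
  exact hwmin ⟨u, humin.1, huw⟩

lemma Min_eq_Min_apply (hST : S ⊆ T)
    (hup : ∀ w ∈ T, ∀ v ∈ T, M.lt v w → v ∈ (s.apply M ψ).Min S →
      ∃ u, (s.apply M ψ).lt u w ∧ u ∈ (s.apply M ψ).Min S)
    (hdown : ∀ w ∈ T, ∀ v ∈ T, (s.apply M ψ).lt v w → v ∈ (s.apply M ψ).Min S →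
      ∃ u, M.lt u w ∧ u ∈ (s.apply M ψ).Min S) :
    M.Min S = (s.apply M ψ).Min S := by
  have hsub := Min_subset_Min_apply s M ψ hST hdown
  refine subset_antisymm hsub fun w ⟨hwS, hwmin⟩ => ⟨hwS, fun ⟨x, hxS, hxw⟩ => ?_⟩
  obtain ⟨z, hzmin, hzw⟩ := M.exists_mem_Min_lt hxS hxw
  obtain ⟨u, huw, humin⟩ := hup w (hST hwS) z (hST hzmin.1) hzw (hsub hzmin)
  exact hwmin ⟨u, humin.1, huw⟩

end Minimality

section Axioms

variable {P : Type} (s : DynOp P) (M : PrefModel P) (φ ψ : PForm P)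

lemma exists_lt_apply_mem_Min_of_dsat
    (hax : ∀ w, dsat s ((DForm.dyn ψ (.boxLt (.neg (DForm.mu φ.toD)))).imp
      (ψ.toD.imp (.boxLt (ψ.toD.imp (.dyn ψ (.neg (DForm.mu φ.toD))))))) M w)
    (w : M.W) (hw : w ∈ pext M ψ) (v : M.W) (hv : v ∈ pext M ψ) (hvw : M.lt v w)
    (hvmin : v ∈ (s.apply M ψ).Min (pext M φ)) :
    ∃ u, (s.apply M ψ).lt u w ∧ u ∈ (s.apply M ψ).Min (pext M φ) := by
  by_contra! hnone
  have h := hax w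
  simp only [dsat_imp, dsat, dsat_toD] at h
  exact h (fun u hu humin => hnone u hu ((dsat_mu_toD_apply s φ ψ M u).1 humin)) hw v hvw hv
    ((dsat_mu_toD_apply s φ ψ M v).2 hvmin)

lemma exists_lt_mem_Min_apply_of_dsat
    (hax : ∀ w, dsat s ((DForm.boxLt (.dyn ψ (.neg (DForm.mu φ.toD)))).imp
      (ψ.toD.imp (.dyn ψ (.boxLt (ψ.toD.imp (.neg (DForm.mu φ.toD))))))) M w)
    (w : M.W) (hw : w ∈ pext M ψ) (v : M.W) (hv : v ∈ pext M ψ)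
    (hvw : (s.apply M ψ).lt v w) (hvmin : v ∈ (s.apply M ψ).Min (pext M φ)) :
    ∃ u, M.lt u w ∧ u ∈ (s.apply M ψ).Min (pext M φ) := by
  by_contra! hnone
  have h := hax w
  simp only [dsat_imp, dsat, dsat_toD] at h
  exact h (fun u hu humin => hnone u hu ((dsat_mu_toD_apply s φ ψ M u).1 humin)) hw v hvw
    ((psat_apply s M ψ ψ v).2 hv) ((dsat_mu_toD_apply s φ ψ M v).2 hvmin)

end Axioms

theorem dp1_axioms_preserve_conditional_beliefs_general {P : Type}
    (𝔐 : Set (PrefModel P)) (s : DynOp P)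
    (hax : ∀ (ψ : PForm P) (ξ : DForm P), ∀ M ∈ 𝔐, ∀ w : M.W,
      dsat s ((DForm.dyn ψ (.boxLe ξ)).imp
        (ψ.toD.imp (.boxLe (ψ.toD.imp (.dyn ψ ξ))))) M w ∧
      dsat s ((DForm.dyn ψ (.boxLt ξ)).imp
        (ψ.toD.imp (.boxLt (ψ.toD.imp (.dyn ψ ξ))))) M w ∧
      dsat s ((DForm.boxLe (.dyn ψ ξ)).imp
        (ψ.toD.imp (.dyn ψ (.boxLe (ψ.toD.imp ξ))))) M w ∧
      dsat s ((DForm.boxLt (.dyn ψ ξ)).imp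
        (ψ.toD.imp (.dyn ψ (.boxLt (ψ.toD.imp ξ))))) M w)
    (φ ψ : PForm P)
    (himp : ∀ M ∈ 𝔐, ∀ w : M.W, dsat s (φ.toD.imp ψ.toD) M w)
    (ξ : DForm P) :
    ∀ M ∈ 𝔐, ∀ w : M.W,
      dsat s ((DForm.dyn ψ (DForm.bel ξ φ.toD)).iff
        (DForm.bel (DForm.dyn ψ ξ) φ.toD)) M w := by
  intro M hM w
  have hφψ : pext M φ ⊆ pext M ψ := fun u hu =>
    (dsat_toD s ψ M u).1 ((dsat_imp s _ _ M u).1 (himp M hM u) ((dsat_toD s φ M u).2 hu))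
  have hMin : M.Min (pext M φ) = (s.apply M ψ).Min (pext M φ) :=
    Min_eq_Min_apply s M ψ hφψ
      (exists_lt_apply_mem_Min_of_dsat s M φ ψ fun w => (hax ψ _ M hM w).2.1)
      (exists_lt_mem_Min_apply_of_dsat s M φ ψ fun w => (hax ψ _ M hM w).2.2.2)
  rw [dsat_iff, dsat_bel_toD, hMin]
  exact dsat_dyn_bel_toD s ξ φ ψ M w

theorem dp1_axioms_preserve_conditional_beliefs {P : Type}
    (𝔐 : Set (PrefModel P)) (s : DynOp P) (hclosed : ClosedOver s 𝔐)
    (hax : ∀ (ψ : PForm P) (ξ : DForm P), ∀ M ∈ 𝔐, ∀ w : M.W,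
      dsat s ((DForm.dyn ψ (.boxLe ξ)).imp
        (ψ.toD.imp (.boxLe (ψ.toD.imp (.dyn ψ ξ))))) M w ∧
      dsat s ((DForm.dyn ψ (.boxLt ξ)).imp
        (ψ.toD.imp (.boxLt (ψ.toD.imp (.dyn ψ ξ))))) M w ∧
      dsat s ((DForm.boxLe (.dyn ψ ξ)).imp
        (ψ.toD.imp (.dyn ψ (.boxLe (ψ.toD.imp ξ))))) M w ∧
      dsat s ((DForm.boxLt (.dyn ψ ξ)).imp
        (ψ.toD.imp (.dyn ψ (.boxLt (ψ.toD.imp ξ))))) M w)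
    (φ ψ : PForm P)
    (himp : ∀ M ∈ 𝔐, ∀ w : M.W, dsat s (φ.toD.imp ψ.toD) M w)
    (ξ : DForm P) :
    ∀ M ∈ 𝔐, ∀ w : M.W,
      dsat s ((DForm.dyn ψ (DForm.bel ξ φ.toD)).iff
        (DForm.bel (DForm.dyn ψ ξ) φ.toD)) M w :=
  dp1_axioms_preserve_conditional_beliefs_general 𝔐 s hax φ ψ himp ξ
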